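/- Suppose F₀(t) is a formal function satisfying the genus-zero topological recursion relation ∂³F₀/∂t^α_{k+1}∂t^β_l∂t^γ_m = Σ_μ (∂²F₀/∂t^α_k∂t^μ_0)(∂³F₀/∂t^μ_0∂t^β_l∂t^γ_m). Then the WDVV equation holds for the third derivatives restricted to descendent level zero: Σ_μ F₀_{αβμ}F₀_{μγδ} = Σ_μ F₀_{αγμ}F₀_{μβδ}, where F₀_{αβγ} = ∂³F₀/∂t^α_0∂t^β_0∂t^γ_0 — provided F₀ additionally satisfies the symmetry of fourth derivatives and the TRR applied at level k=0 in two different orders. -/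
import Mathlib


/-- Genus-zero TRR implies WDVV.  Formal functions are modelled
by a commutative ℂ-algebra `R` with commuting derivations
`d (μ,k) = ∂/∂t^μ_k`.  If `F₀ ∈ R` satisfies the topological recursion
relation
`∂³F₀/∂t^α_{k+1}∂t^β_l∂t^γ_m = Σ_μ (∂²F₀/∂t^α_k∂t^μ_0)(∂³F₀/∂t^μ_0∂t^β_l∂t^γ_m)`
for all indices, then the WDVV equation
`Σ_μ F₀_{αβμ}F₀_{μγδ} = Σ_μ F₀_{αγμ}F₀_{μβδ}` holds, where
`F₀_{αβγ} = ∂³F₀/∂t^α_0∂t^β_0∂t^γ_0`. -/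
theorem trr_implies_wdvv
    {R : Type*} [CommRing R] [Algebra ℂ R] {N : ℕ}
    (d : Fin N × ℕ → Derivation ℂ R R)
    (hcomm : ∀ (p q : Fin N × ℕ) (x : R), d p (d q x) = d q (d p x))
    (F : R)
    (hTRR : ∀ (α β γ : Fin N) (k l m : ℕ),
      d (α, k + 1) (d (β, l) (d (γ, m) F))
        = ∑ μ, d (α, k) (d (μ, 0) F) * d (μ, 0) (d (β, l) (d (γ, m) F))) :
    ∀ α β γ δ : Fin N,
      (∑ μ, d (α, 0) (d (β, 0) (d (μ, 0) F)) * d (μ, 0) (d (γ, 0) (d (δ, 0) F)))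
        = ∑ μ, d (α, 0) (d (γ, 0) (d (μ, 0) F)) * d (μ, 0) (d (β, 0) (d (δ, 0) F)) := by
  intro α β γ δ
  -- differentiate the TRR (k = l = m = 0) with respect to `d (b,0)`
  have key : ∀ b c e : Fin N,
      d (b, 0) (d (α, 1) (d (c, 0) (d (e, 0) F)))
        = ∑ μ, (d (b, 0) (d (α, 0) (d (μ, 0) F)) * d (μ, 0) (d (c, 0) (d (e, 0) F))
            + d (α, 0) (d (μ, 0) F) * d (b, 0) (d (μ, 0) (d (c, 0) (d (e, 0) F)))) := by
    intro b c e
    rw [hTRR α c e 0 0 0, map_sum]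
    refine Finset.sum_congr rfl fun μ _ => ?_
    rw [Derivation.leibniz, smul_eq_mul, smul_eq_mul]
    ring
  have h1 := key β γ δ
  have h2 := key γ β δ
  -- the two left-hand sides coincide by symmetry of derivatives
  have hL : d (β, 0) (d (α, 1) (d (γ, 0) (d (δ, 0) F)))
      = d (γ, 0) (d (α, 1) (d (β, 0) (d (δ, 0) F))) := by
    rw [hcomm (β, 0) (α, 1), hcomm (γ, 0) (α, 1)]
    congr 1
    rw [hcomm (β, 0) (γ, 0)]
  have h3 := h1.symm.trans (hL.trans h2)
  rw [Finset.sum_add_distrib, Finset.sum_add_distrib] at h3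
  -- the second summands agree termwise
  have hsec : (∑ μ, d (α, 0) (d (μ, 0) F) * d (β, 0) (d (μ, 0) (d (γ, 0) (d (δ, 0) F))))
      = ∑ μ, d (α, 0) (d (μ, 0) F) * d (γ, 0) (d (μ, 0) (d (β, 0) (d (δ, 0) F))) := by
    refine Finset.sum_congr rfl fun μ _ => ?_
    congr 1
    rw [hcomm (β, 0) (μ, 0), hcomm (γ, 0) (μ, 0)]
    congr 1
    rw [hcomm (β, 0) (γ, 0)]
  rw [hsec] at h3
  have h4 := add_right_cancel h3
  calc (∑ μ, d (α, 0) (d (β, 0) (d (μ, 0) F)) * d (μ, 0) (d (γ, 0) (d (δ, 0) F)))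
      = ∑ μ, d (β, 0) (d (α, 0) (d (μ, 0) F)) * d (μ, 0) (d (γ, 0) (d (δ, 0) F)) := by
        refine Finset.sum_congr rfl fun μ _ => ?_
        rw [hcomm (α, 0) (β, 0)]
    _ = ∑ μ, d (γ, 0) (d (α, 0) (d (μ, 0) F)) * d (μ, 0) (d (β, 0) (d (δ, 0) F)) := h4
    _ = ∑ μ, d (α, 0) (d (γ, 0) (d (μ, 0) F)) * d (μ, 0) (d (β, 0) (d (δ, 0) F)) := by
        refine Finset.sum_congr rfl fun μ _ => ?_
        rw [hcomm (α, 0) (γ, 0)]
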